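/- Let d = (d_1,…,d_n) be a degree sequence with m = (∑_v d_v)/2 an integer and m ≥ 3, and let G be drawn from ECM(d). Then for any three distinct vertices v, w, w′, the probability that both (v,w) and (v,w′) are edges of G is at most d_v(d_v − 1)·d_w·d_{w′}/m², and in particular at most d_v²·d_w·d_{w′}/m². -/

import Mathlib

open Finset

noncomputable section
attribute [local instance] Classical.propDecidable

/-- The perfect matchings of the stub set `Fin N`: fixed-point-free involutions. -/
def matchings (N : ℕ) : Finset (Equiv.Perm (Fin N)) :=
  Finset.univ.filter fun M => ∀ s, M (M s) = s ∧ M s ≠ s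

/-- `φ` is a stub map for the degree sequence `d`: vertex `v` owns exactly `d v` stubs. -/
def IsStubMap {n N : ℕ} (d : Fin n → ℕ) (φ : Fin N → Fin n) : Prop :=
  ∀ v, (Finset.univ.filter fun s => φ s = v).card = d v

/-- Adjacency in the erased (simple) graph: distinct vertices joined by a matched stub pair. -/
def ecmAdj {n N : ℕ} (φ : Fin N → Fin n) (M : Equiv.Perm (Fin N)) (u v : Fin n) : Prop :=
  u ≠ v ∧ ∃ s, φ s = u ∧ φ (M s) = v

/-- The degree `D_v` of vertex `v` in the erased graph. -/
def ecmDeg {n N : ℕ} (φ : Fin N → Fin n) (M : Equiv.Perm (Fin N)) (v : Fin n) : ℕ :=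
  (Finset.univ.filter fun u => ecmAdj φ M u v).card

/-- The edge `(v,w)` is present and lies in `v`'s bucket:
`(D_v, v) ≤ (D_w, w)` lexicographically. -/
def inBucket {n N : ℕ} (φ : Fin N → Fin n) (M : Equiv.Perm (Fin N)) (v w : Fin n) : Prop :=
  ecmAdj φ M v w ∧
    (ecmDeg φ M v < ecmDeg φ M w ∨ (ecmDeg φ M v = ecmDeg φ M w ∧ v ≤ w))

/-- Indicator `Y_{v,w}` that the edge `(v,w)` is present and in `v`'s bucket. -/
def ecmY {n N : ℕ} (φ : Fin N → Fin n) (M : Equiv.Perm (Fin N)) (v w : Fin n) : ℝ :=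
  if inBucket φ M v w then 1 else 0

/-- `X_v`, the number of edges in `v`'s bucket. -/
def ecmX {n N : ℕ} (φ : Fin N → Fin n) (M : Equiv.Perm (Fin N)) (v : Fin n) : ℝ :=
  ∑ w, ecmY φ M v w

/-- Expectation over the uniformly random perfect matching. -/
def ecmExp (N : ℕ) (g : Equiv.Perm (Fin N) → ℝ) : ℝ :=
  (∑ M ∈ matchings N, g M) / ((matchings N).card : ℝ)

/-- Probability of an event over the uniformly random perfect matching. -/
def ecmProb (N : ℕ) (A : Equiv.Perm (Fin N) → Prop) : ℝ :=
  (((matchings N).filter A).card : ℝ) / ((matchings N).card : ℝ)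

namespace ECMAux

lemma mem_matchings {N : ℕ} {M : Equiv.Perm (Fin N)} :
    M ∈ matchings N ↔ ∀ s, M (M s) = s ∧ M s ≠ s := by
  simp [matchings]

lemma extend_injOn {α : Type*} [DecidableEq α] [Fintype α] (f : α → α) :
    ∀ s : Finset α, Set.InjOn f s → ∃ σ : Equiv.Perm α, ∀ x ∈ s, σ x = f x := by
  intro s
  induction s using Finset.induction_on with
  | empty => exact fun _ => ⟨1, by simp⟩
  | @insert a s ha ih =>
    intro hf
    obtain ⟨σ, hσ⟩ := ih (hf.mono (Finset.coe_subset.mpr (Finset.subset_insert a s)))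
    refine ⟨Equiv.swap (σ a) (f a) * σ, ?_⟩
    intro x hx
    rcases Finset.mem_insert.mp hx with rfl | hx
    · simp [Equiv.Perm.mul_apply]
    · have hxa : x ≠ a := fun h => ha (h ▸ hx)
      have h1 : σ x = f x := hσ x hx
      have h2 : f x ≠ σ a := fun h => hxa (σ.injective (h1.trans h))
      have h3 : f x ≠ f a := fun h =>
        hxa (hf (Finset.mem_insert_of_mem hx) (Finset.mem_insert_self a s) h)
      simp [Equiv.Perm.mul_apply, h1, Equiv.swap_apply_of_ne_of_ne h2 h3]

lemma conj_mem {N : ℕ} {σ M : Equiv.Perm (Fin N)} (hM : M ∈ matchings N) :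
    σ * M * σ⁻¹ ∈ matchings N := by
  rw [mem_matchings] at hM ⊢
  intro s
  simp only [Equiv.Perm.mul_apply]
  constructor
  · simp [(hM _).1]
  · intro h
    have : M (σ⁻¹ s) = σ⁻¹ s := σ.injective (by simpa using h)
    exact (hM (σ⁻¹ s)).2 this

def Cnt (N : ℕ) (a b c d : Fin N) : ℕ :=
  ((matchings N).filter fun M => M a = b ∧ M c = d).card

lemma Cnt_conj {N : ℕ} (σ : Equiv.Perm (Fin N)) (a b c d : Fin N) :
    Cnt N a b c d = Cnt N (σ a) (σ b) (σ c) (σ d) := by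
  unfold Cnt
  refine Finset.card_bij' (fun M _ => σ * M * σ⁻¹) (fun M _ => σ⁻¹ * M * σ) ?_ ?_ ?_ ?_
  · intro M hM
    simp only [Finset.mem_filter] at hM ⊢
    refine ⟨conj_mem hM.1, ?_, ?_⟩ <;>
      simp [Equiv.Perm.mul_apply, hM.2.1, hM.2.2]
  · intro M hM
    simp only [Finset.mem_filter] at hM ⊢
    have h1 : σ⁻¹ * M * σ = σ⁻¹ * M * (σ⁻¹)⁻¹ := by simp
    refine ⟨h1 ▸ conj_mem hM.1, ?_, ?_⟩
    · have := hM.2.1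
      simp only [Equiv.Perm.mul_apply]
      simp [this]
    · have := hM.2.2
      simp only [Equiv.Perm.mul_apply]
      simp [this]
  · intro M _; ext x; simp [Equiv.Perm.mul_apply]
  · intro M _; ext x; simp [Equiv.Perm.mul_apply]

lemma Cnt_eq {N : ℕ} (a b c d a' b' c' d' : Fin N)
    (hab : a ≠ b) (hac : a ≠ c) (had : a ≠ d) (hbc : b ≠ c) (hbd : b ≠ d) (hcd : c ≠ d)
    (hab' : a' ≠ b') (hac' : a' ≠ c') (had' : a' ≠ d') (hbc' : b' ≠ c') (hbd' : b' ≠ d')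
    (hcd' : c' ≠ d') :
    Cnt N a b c d = Cnt N a' b' c' d' := by
  set f : Fin N → Fin N := fun x =>
    if x = a then a' else if x = b then b' else if x = c then c' else d' with hf
  have hinj : Set.InjOn f ({a, b, c, d} : Finset (Fin N)) := by
    intro x hx y hy hxy
    simp only [Finset.coe_insert, Set.mem_insert_iff, Finset.coe_singleton,
      Set.mem_singleton_iff] at hx hy
    rcases hx with rfl | rfl | rfl | rfl <;> rcases hy with rfl | rfl | rfl | rfl <;>
      first
      | rfl
      | (exact absurd hxy (by
          simp [hf, hab, hac, had, hbc, hbd, hcd,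
            hab.symm, hac.symm, had.symm, hbc.symm, hbd.symm, hcd.symm,
            hab', hac', had', hbc', hbd', hcd',
            hab'.symm, hac'.symm, had'.symm, hbc'.symm, hbd'.symm, hcd'.symm]))
  obtain ⟨σ, hσ⟩ := extend_injOn f {a, b, c, d} hinj
  have ha : σ a = a' := by rw [hσ a (by simp)]; simp [hf]
  have hb : σ b = b' := by rw [hσ b (by simp)]; simp [hf, hab.symm]
  have hc : σ c = c' := by
    rw [hσ c (by simp)]; simp [hf, hac.symm, hbc.symm]
  have hd : σ d = d' := by
    rw [hσ d (by simp)]; simp [hf, had.symm, hbd.symm, hcd.symm]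
  rw [Cnt_conj σ a b c d, ha, hb, hc, hd]

lemma card_matchings_eq {N : ℕ} (z0 z1 z2 z3 : Fin N)
    (h01 : z0 ≠ z1) (h02 : z0 ≠ z2) (h03 : z0 ≠ z3)
    (h12 : z1 ≠ z2) (h13 : z1 ≠ z3) (h23 : z2 ≠ z3) :
    (matchings N).card = (N - 1) * ((N - 3) * Cnt N z0 z1 z2 z3) := by
  set K := Cnt N z0 z1 z2 z3 with hK
  have step1 : (matchings N).card = ∑ b ∈ Finset.univ.erase z0,
      ((matchings N).filter fun M => M z0 = b).card := by
    apply Finset.card_eq_sum_card_fiberwise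
    intro M hM
    exact Finset.mem_erase.mpr ⟨(mem_matchings.mp hM z0).2, Finset.mem_univ _⟩
  rw [step1]
  have hfib : ∀ b ∈ Finset.univ.erase z0,
      ((matchings N).filter fun M => M z0 = b).card = (N - 3) * K := by
    intro b hb
    have hb0 : b ≠ z0 := (Finset.mem_erase.mp hb).1
    set c : Fin N := if b = z1 then z2 else z1 with hc
    have hc0 : c ≠ z0 := by
      by_cases h : b = z1 <;> simp [hc, h, h02.symm, h01.symm]
    have hcb : c ≠ b := by
      by_cases h : b = z1 <;> simp [hc, h]
      · exact h12.symm
      · exact fun hh => h hh.symm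
    have step2 : ((matchings N).filter fun M => M z0 = b).card =
        ∑ dd ∈ Finset.univ \ {z0, b, c},
          (((matchings N).filter fun M => M z0 = b).filter fun M => M c = dd).card := by
      apply Finset.card_eq_sum_card_fiberwise
      intro M hM
      obtain ⟨hMm, hMb⟩ := Finset.mem_filter.mp hM
      have h := mem_matchings.mp hMm
      simp only [Finset.mem_coe, Finset.mem_sdiff, Finset.mem_univ, true_and, Finset.mem_insert,
        Finset.mem_singleton]
      push_neg
      refine ⟨?_, ?_, (h c).2⟩
      · intro hMc0
        have h2 : M (M c) = M z0 := congrArg M hMc0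
        rw [(h c).1, hMb] at h2; exact hcb h2
      · intro hMcb
        have h2 : M (M c) = M b := congrArg M hMcb
        have hMb2 : M b = z0 := by rw [← hMb, (h z0).1]
        rw [(h c).1, hMb2] at h2; exact hc0 h2
    rw [step2]
    have hterm : ∀ dd ∈ Finset.univ \ ({z0, b, c} : Finset (Fin N)),
        (((matchings N).filter fun M => M z0 = b).filter fun M => M c = dd).card = K := by
      intro dd hdd
      simp only [Finset.mem_sdiff, Finset.mem_univ, true_and, Finset.mem_insert,
        Finset.mem_singleton] at hdd
      push_neg at hdd
      obtain ⟨hd0, hdb, hdc⟩ := hdd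
      have heq : (((matchings N).filter fun M => M z0 = b).filter fun M => M c = dd) =
          ((matchings N).filter fun M => M z0 = b ∧ M c = dd) := by
        ext M; simp [Finset.mem_filter, and_assoc]
      rw [heq]
      exact Cnt_eq z0 b c dd z0 z1 z2 z3 hb0.symm hc0.symm (Ne.symm hd0) hcb.symm
        (Ne.symm hdb) (Ne.symm hdc) h01 h02 h03 h12 h13 h23
    rw [Finset.sum_congr rfl hterm, Finset.sum_const, smul_eq_mul]
    congr 1
    rw [Finset.card_sdiff_of_subset (Finset.subset_univ _), Finset.card_univ, Fintype.card_fin]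
    congr 1
    rw [Finset.card_insert_of_notMem (by simp [hb0.symm, hc0.symm]),
      Finset.card_insert_of_notMem (by simp [hcb.symm]), Finset.card_singleton]
  rw [Finset.sum_congr rfl hfib, Finset.sum_const, smul_eq_mul,
    Finset.card_erase_of_mem (Finset.mem_univ _), Finset.card_univ, Fintype.card_fin]

end ECMAux

/-- For a degree sequence `d` with `∑ d_v = 2m`, `m ≥ 3`, and any three
distinct vertices `v, w, w'`, the probability over `ECM(d)` that both `(v,w)` and `(v,w')`
are edges is at most `d_v (d_v - 1) d_w d_{w'} / m²`, and in particular at most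
`d_v² d_w d_{w'} / m²`. -/
theorem ecm_pair_edge_probability
    (n m : ℕ) (d : Fin n → ℕ) (φ : Fin (2 * m) → Fin n)
    (hpos : ∀ v, 0 < d v)
    (hsum : (∑ v, d v) = 2 * m)
    (hm : 3 ≤ m)
    (hφ : IsStubMap d φ)
    (v w w' : Fin n) (hvw : v ≠ w) (hvw' : v ≠ w') (hww' : w ≠ w') :
    ecmProb (2 * m) (fun M => ecmAdj φ M v w ∧ ecmAdj φ M v w') ≤
        (d v : ℝ) * ((d v : ℝ) - 1) * (d w : ℝ) * (d w' : ℝ) / (m : ℝ) ^ 2 ∧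
      ecmProb (2 * m) (fun M => ecmAdj φ M v w ∧ ecmAdj φ M v w') ≤
        (d v : ℝ) ^ 2 * (d w : ℝ) * (d w' : ℝ) / (m : ℝ) ^ 2 := by
  have hm6 : 6 ≤ 2 * m := by omega
  have h01 : (⟨0, by omega⟩ : Fin (2 * m)) ≠ ⟨1, by omega⟩ := by simp [Fin.ext_iff]
  have h02 : (⟨0, by omega⟩ : Fin (2 * m)) ≠ ⟨2, by omega⟩ := by simp [Fin.ext_iff]
  have h03 : (⟨0, by omega⟩ : Fin (2 * m)) ≠ ⟨3, by omega⟩ := by simp [Fin.ext_iff]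
  have h12 : (⟨1, by omega⟩ : Fin (2 * m)) ≠ ⟨2, by omega⟩ := by simp [Fin.ext_iff]
  have h13 : (⟨1, by omega⟩ : Fin (2 * m)) ≠ ⟨3, by omega⟩ := by simp [Fin.ext_iff]
  have h23 : (⟨2, by omega⟩ : Fin (2 * m)) ≠ ⟨3, by omega⟩ := by simp [Fin.ext_iff]
  set K := ECMAux.Cnt (2 * m) ⟨0, by omega⟩ ⟨1, by omega⟩ ⟨2, by omega⟩ ⟨3, by omega⟩ with hKdef
  have htot : (matchings (2 * m)).card = (2 * m - 1) * ((2 * m - 3) * K) :=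
    ECMAux.card_matchings_eq _ _ _ _ h01 h02 h03 h12 h13 h23
  set A : Finset (Fin (2 * m)) := Finset.univ.filter (fun s => φ s = v) with hAdef
  set B : Finset (Fin (2 * m)) := Finset.univ.filter (fun s => φ s = w) with hBdef
  set C : Finset (Fin (2 * m)) := Finset.univ.filter (fun s => φ s = w') with hCdef
  have hAc : A.card = d v := hφ v
  have hBc : B.card = d w := hφ w
  have hCc : C.card = d w' := hφ w'
  set S : Finset ((Fin (2 * m) × Fin (2 * m)) × (Fin (2 * m) × Fin (2 * m))) :=
    A.offDiag ×ˢ (B ×ˢ C) with hSdef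
  set E : Finset (Equiv.Perm (Fin (2 * m))) :=
    (matchings (2 * m)).filter (fun M => ecmAdj φ M v w ∧ ecmAdj φ M v w') with hEdef
  have hsub : E ⊆ S.biUnion (fun q =>
      (matchings (2 * m)).filter fun M => M q.1.1 = q.2.1 ∧ M q.1.2 = q.2.2) := by
    intro M hM
    obtain ⟨hMm, ⟨-, s₁, hs₁v, hs₁w⟩, ⟨-, s₂, hs₂v, hs₂w⟩⟩ := Finset.mem_filter.mp hM
    have hss : s₁ ≠ s₂ := by
      intro h; exact hww' (by rw [← hs₁w, h, hs₂w])
    refine Finset.mem_biUnion.mpr ⟨((s₁, s₂), (M s₁, M s₂)), ?_, ?_⟩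
    · refine Finset.mem_product.mpr ⟨Finset.mem_offDiag.mpr ⟨?_, ?_, hss⟩,
        Finset.mem_product.mpr ⟨?_, ?_⟩⟩ <;>
        simp [hAdef, hBdef, hCdef, hs₁v, hs₂v, hs₁w, hs₂w]
    · exact Finset.mem_filter.mpr ⟨hMm, rfl, rfl⟩
  have hterm : ∀ q ∈ S,
      ((matchings (2 * m)).filter fun M => M q.1.1 = q.2.1 ∧ M q.1.2 = q.2.2).card = K := by
    rintro ⟨⟨s₁, s₂⟩, t₁, t₂⟩ hq
    obtain ⟨hq1, hq2⟩ := Finset.mem_product.mp hq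
    obtain ⟨hs₁A, hs₂A, hss⟩ := Finset.mem_offDiag.mp hq1
    obtain ⟨ht₁B, ht₂C⟩ := Finset.mem_product.mp hq2
    have hs₁v : φ s₁ = v := by simpa [hAdef] using hs₁A
    have hs₂v : φ s₂ = v := by simpa [hAdef] using hs₂A
    have ht₁w : φ t₁ = w := by simpa [hBdef] using ht₁B
    have ht₂w : φ t₂ = w' := by simpa [hCdef] using ht₂C
    exact ECMAux.Cnt_eq s₁ t₁ s₂ t₂ _ _ _ _
      (fun h => hvw (by rw [← hs₁v, h, ht₁w]))
      hss
      (fun h => hvw' (by rw [← hs₁v, h, ht₂w]))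
      (fun h => hvw (by rw [← hs₂v, ← h, ht₁w]))
      (fun h => hww' (by rw [← ht₁w, h, ht₂w]))
      (fun h => hvw' (by rw [← hs₂v, h, ht₂w]))
      h01 h02 h03 h12 h13 h23
  have hEcard : E.card ≤ ((d v * d v - d v) * (d w * d w')) * K := by
    calc E.card ≤ (S.biUnion (fun q =>
          (matchings (2 * m)).filter fun M => M q.1.1 = q.2.1 ∧ M q.1.2 = q.2.2)).card :=
        Finset.card_le_card hsub
      _ ≤ ∑ q ∈ S,
          ((matchings (2 * m)).filter fun M => M q.1.1 = q.2.1 ∧ M q.1.2 = q.2.2).card :=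
        Finset.card_biUnion_le
      _ = S.card * K := by rw [Finset.sum_congr rfl hterm, Finset.sum_const, smul_eq_mul]
      _ = ((d v * d v - d v) * (d w * d w')) * K := by
        rw [hSdef, Finset.card_product, Finset.card_product, Finset.offDiag_card,
          hAc, hBc, hCc]
  have hfilt : (matchings (2 * m)).filter (fun M => ecmAdj φ M v w ∧ ecmAdj φ M v w') = E := by
    ext M; simp [hEdef, Finset.mem_filter]
  have hprob : ecmProb (2 * m) (fun M => ecmAdj φ M v w ∧ ecmAdj φ M v w') =
      (E.card : ℝ) / (((matchings (2 * m)).card : ℕ) : ℝ) := by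
    unfold ecmProb
    congr 3
    ext M
    simp [hEdef, Finset.mem_filter]
  clear hsub hterm hfilt
  clear_value E S A B C K
  clear hEdef hSdef hAdef hBdef hCdef hKdef hφ hsum hm6
  have hdv1 : (1 : ℝ) ≤ (d v : ℝ) := by exact_mod_cast hpos v
  have hnn : 0 ≤ (d v : ℝ) * ((d v : ℝ) - 1) * (d w : ℝ) * (d w' : ℝ) := by
    have h0 : (0:ℝ) ≤ (d v : ℝ) - 1 := by linarith
    positivity
  have hrhs1 : 0 ≤ (d v : ℝ) * ((d v : ℝ) - 1) * (d w : ℝ) * (d w' : ℝ) / (m : ℝ) ^ 2 :=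
    div_nonneg hnn (by positivity)
  have hmR : (3 : ℝ) ≤ (m : ℝ) := by exact_mod_cast hm
  have key : ecmProb (2 * m) (fun M => ecmAdj φ M v w ∧ ecmAdj φ M v w') ≤
      (d v : ℝ) * ((d v : ℝ) - 1) * (d w : ℝ) * (d w' : ℝ) / (m : ℝ) ^ 2 := by
    by_cases hC0 : (matchings (2 * m)).card = 0
    · rw [hprob, hC0]; simpa using hrhs1
    · have hK0 : 0 < K := by
        rcases Nat.eq_zero_or_pos K with h | h
        · rw [h, mul_zero, mul_zero] at htot; exact absurd htot hC0
        · exact h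
      have hKposR : 0 < (K : ℝ) := by exact_mod_cast hK0
      have hcast1 : ((2 * m - 1 : ℕ) : ℝ) = 2 * (m : ℝ) - 1 := by
        have h1 : (1:ℕ) ≤ 2 * m := by omega
        push_cast [Nat.cast_sub h1]; ring
      have hcast3 : ((2 * m - 3 : ℕ) : ℝ) = 2 * (m : ℝ) - 3 := by
        have h1 : (3:ℕ) ≤ 2 * m := by omega
        push_cast [Nat.cast_sub h1]; ring
      have hnum : ((d v * d v - d v : ℕ) : ℝ) = (d v : ℝ) * ((d v : ℝ) - 1) := by
        have h1 : d v ≤ d v * d v := Nat.le_mul_of_pos_left _ (hpos v)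
        push_cast [Nat.cast_sub h1]; ring
      have hdenom : (((2 * m - 1) * ((2 * m - 3) * K) : ℕ) : ℝ) =
          (2 * (m : ℝ) - 1) * ((2 * (m : ℝ) - 3) * (K : ℝ)) := by
        push_cast [hcast1, hcast3]; ring
      have hstep1 : (E.card : ℝ) ≤
          (d v : ℝ) * ((d v : ℝ) - 1) * (d w : ℝ) * (d w' : ℝ) * (K : ℝ) := by
        calc (E.card : ℝ) ≤ ((((d v * d v - d v) * (d w * d w')) * K : ℕ) : ℝ) := by
              exact_mod_cast hEcard
          _ = (d v : ℝ) * ((d v : ℝ) - 1) * (d w : ℝ) * (d w' : ℝ) * (K : ℝ) := by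
              push_cast [hnum]; ring
      have hdpos : (0:ℝ) < (2 * (m : ℝ) - 1) * ((2 * (m : ℝ) - 3) * (K : ℝ)) := by
        apply mul_pos (by linarith) (mul_pos (by linarith) hKposR)
      rw [hprob, htot, hdenom]
      have h2 : (E.card : ℝ) / ((2 * (m : ℝ) - 1) * ((2 * (m : ℝ) - 3) * (K : ℝ))) ≤
          (d v : ℝ) * ((d v : ℝ) - 1) * (d w : ℝ) * (d w' : ℝ) * (K : ℝ) /
            ((2 * (m : ℝ) - 1) * ((2 * (m : ℝ) - 3) * (K : ℝ))) := by
        gcongr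
      refine h2.trans ?_
      have h3 : (d v : ℝ) * ((d v : ℝ) - 1) * (d w : ℝ) * (d w' : ℝ) * (K : ℝ) /
            ((2 * (m : ℝ) - 1) * ((2 * (m : ℝ) - 3) * (K : ℝ))) =
          (d v : ℝ) * ((d v : ℝ) - 1) * (d w : ℝ) * (d w' : ℝ) /
            ((2 * (m : ℝ) - 1) * (2 * (m : ℝ) - 3)) := by
        have hKne : (K : ℝ) ≠ 0 := hKposR.ne'
        have hne1 : (2 * (m : ℝ) - 1) ≠ 0 := by intro h; linarith [h.le]
        have hne3 : (2 * (m : ℝ) - 3) ≠ 0 := by intro h; linarith [h.le]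
        field_simp
      rw [h3]
      have hm2 : (m : ℝ) ^ 2 ≤ (2 * (m : ℝ) - 1) * (2 * (m : ℝ) - 3) := by nlinarith
      exact div_le_div_of_nonneg_left hnn (by positivity) hm2
  refine ⟨key, key.trans ?_⟩
  have h0v : (0:ℝ) ≤ (d v : ℝ) := Nat.cast_nonneg _
  have h0w : (0:ℝ) ≤ (d w : ℝ) := Nat.cast_nonneg _
  have h0w' : (0:ℝ) ≤ (d w' : ℝ) := Nat.cast_nonneg _
  have h1 : (d v : ℝ) * ((d v : ℝ) - 1) * (d w : ℝ) * (d w' : ℝ) ≤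
      (d v : ℝ) ^ 2 * (d w : ℝ) * (d w' : ℝ) := by
    nlinarith [mul_nonneg (mul_nonneg h0v h0w) h0w']
  have hm2pos : (0:ℝ) < (m : ℝ) ^ 2 := by positivity
  first
  | exact (div_le_div_iff_of_pos_right hm2pos).mpr h1
  | exact (div_le_div_iff_right hm2pos).mpr h1
  | exact div_le_div_of_nonneg_right h1 hm2pos
  | (gcongr; exact h1)
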